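/- arXiv:1211.2944 — 4 statements merged into one kernel-verified Lean document; each statement's English description precedes it below -/
import Mathlib

section
/- Let f0, f1, f2, f3 be natural numbers and let t : ℕ → ℕ satisfy t k = 0 unless 3 ≤ k ≤ N (for some N ≥ 3). Assume the Euler identity f0 - f1 + f2 - f3 = 0, the relation f1 = 4·f0, the relation f2 = Σ_{k=3}^{N} t k, and the relation 12·f0 = Σ_{k=3}^{N} k · t k. Then f3 ≤ f0. -/
/-! Every 2-face has at least three vertices, so `3 f₂ ≤ Σ k t_k = 12 f₀`, i.e. `f₂ ≤ 4 f₀`.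
With `f₁ = 4 f₀`, Euler's identity reads `f₃ = f₂ - 3 f₀ ≤ f₀`. -/

theorem Finset.mul_sum_Icc_le_sum_mul (m N : ℕ) (t : ℕ → ℕ) :
    m * ∑ k ∈ Finset.Icc m N, t k ≤ ∑ k ∈ Finset.Icc m N, k * t k := by
  rw [Finset.mul_sum]
  exact Finset.sum_le_sum fun k hk => Nat.mul_le_mul_right _ (Finset.mem_Icc.mp hk).1

theorem facets_le_vertices_general
    (f0 f1 f2 f3 N : ℕ) (t : ℕ → ℕ)
    (hEuler : (f0 : ℤ) - f1 + f2 - f3 = 0)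
    (hEdge : f1 = 4 * f0)
    (hF2 : f2 = ∑ k ∈ Finset.Icc 3 N, t k)
    (hVert : 12 * f0 = ∑ k ∈ Finset.Icc 3 N, k * t k) :
    f3 ≤ f0 := by
  have hFaces : 3 * f2 ≤ 12 * f0 := hF2 ▸ hVert ▸ Finset.mul_sum_Icc_le_sum_mul 3 N t
  omega

/-- For an ideal right-angled polytope in `ℍ⁴`, the number of facets is at most
the number of vertices. -/
theorem facets_le_vertices
    (f0 f1 f2 f3 N : ℕ) (t : ℕ → ℕ) (hN : 3 ≤ N)
    (ht : ∀ k : ℕ, ¬(3 ≤ k ∧ k ≤ N) → t k = 0)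
    (hEuler : (f0 : ℤ) - f1 + f2 - f3 = 0)
    (hEdge : f1 = 4 * f0)
    (hF2 : f2 = ∑ k ∈ Finset.Icc 3 N, t k)
    (hVert : 12 * f0 = ∑ k ∈ Finset.Icc 3 N, k * t k) :
    f3 ≤ f0 :=
  facets_le_vertices_general f0 f1 f2 f3 N t hEuler hEdge hF2 hVert
end

section
/- Let f0, f1, f2, f3 be natural numbers and let t : ℕ → ℕ satisfy t k = 0 unless 3 ≤ k ≤ N (for some N ≥ 3). Assume the Euler identity f0 - f1 + f2 - f3 = 0, the relation f1 = 4·f0, the relation f2 = Σ_{k=3}^{N} t k, and the relation 12·f0 = Σ_{k=3}^{N} k · t k. Then in the real numbers ((f0 : ℝ) - f3 + 4)·π²/3 ≥ 4·π²/3, with equality if and only if t k = 0 for every k ≥ 4. -/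
open Real

/-!
Counting the 2-faces with weights `1` and `k` and eliminating `f₁, f₂` from Euler's identity
gives `3 (f₀ - f₃) = ∑ₖ (k - 3) tₖ`. Every term is nonnegative, so `f₀ ≥ f₃`, and the sum
vanishes exactly when there are no faces with four or more sides.
-/

theorem three_mul_sub_eq_sum_sub_three_mul (f0 f1 f2 f3 : ℕ) (s : Finset ℕ) (t : ℕ → ℕ)
    (hEuler : (f0 : ℤ) - f1 + f2 - f3 = 0) (hEdge : f1 = 4 * f0)
    (hF2 : f2 = ∑ k ∈ s, t k) (hVert : 12 * f0 = ∑ k ∈ s, k * t k) :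
    3 * ((f0 : ℤ) - f3) = ∑ k ∈ s, ((k : ℤ) - 3) * t k := by
  have hF2' : (f2 : ℤ) = ∑ k ∈ s, (t k : ℤ) := by exact_mod_cast hF2
  have hVert' : 12 * (f0 : ℤ) = ∑ k ∈ s, (k : ℤ) * t k := by exact_mod_cast hVert
  have hEdge' : (f1 : ℤ) = 4 * f0 := by exact_mod_cast hEdge
  calc 3 * ((f0 : ℤ) - f3) = 12 * f0 - 3 * f2 := by linarith
    _ = ∑ k ∈ s, ((k : ℤ) - 3) * t k := by
      simp only [hVert', hF2', Finset.mul_sum, ← Finset.sum_sub_distrib, sub_mul]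

section ExcessSum

variable {s : Finset ℕ} (hs : ∀ k ∈ s, 3 ≤ k) (t : ℕ → ℕ)
include hs

theorem sum_sub_three_mul_nonneg : 0 ≤ ∑ k ∈ s, ((k : ℤ) - 3) * t k :=
  Finset.sum_nonneg fun k hk => mul_nonneg (by have := hs k hk; omega) (Int.natCast_nonneg _)

theorem sum_sub_three_mul_eq_zero_iff :
    ∑ k ∈ s, ((k : ℤ) - 3) * t k = 0 ↔ ∀ k ∈ s, 4 ≤ k → t k = 0 := by
  rw [Finset.sum_eq_zero_iff_of_nonneg fun k hk =>
    mul_nonneg (by have := hs k hk; omega) (Int.natCast_nonneg _)]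
  refine forall₂_congr fun k hk => ?_
  have := hs k hk
  rw [mul_eq_zero]
  omega

end ExcessSum

theorem add_four_mul_pi_sq_div_three_ge_and_eq_iff {d : ℝ} (hd : 0 ≤ d) :
    (d + 4) * π ^ 2 / 3 ≥ 4 * π ^ 2 / 3 ∧ ((d + 4) * π ^ 2 / 3 = 4 * π ^ 2 / 3 ↔ d = 0) := by
  have hπ : 0 < π ^ 2 := by positivity
  refine ⟨by nlinarith, ⟨fun h => ?_, fun h => by rw [h, zero_add]⟩⟩
  nlinarith

theorem volume_ge_24cell_general
    (f0 f1 f2 f3 N : ℕ) (t : ℕ → ℕ)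
    (ht : ∀ k : ℕ, ¬(3 ≤ k ∧ k ≤ N) → t k = 0)
    (hEuler : (f0 : ℤ) - f1 + f2 - f3 = 0)
    (hEdge : f1 = 4 * f0)
    (hF2 : f2 = ∑ k ∈ Finset.Icc 3 N, t k)
    (hVert : 12 * f0 = ∑ k ∈ Finset.Icc 3 N, k * t k) :
    ((f0 : ℝ) - (f3 : ℝ) + 4) * π ^ 2 / 3 ≥ 4 * π ^ 2 / 3 ∧
      (((f0 : ℝ) - (f3 : ℝ) + 4) * π ^ 2 / 3 = 4 * π ^ 2 / 3 ↔
        ∀ k : ℕ, 4 ≤ k → t k = 0) := by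
  have hs : ∀ k ∈ Finset.Icc 3 N, 3 ≤ k := fun k hk => (Finset.mem_Icc.mp hk).1
  have key := three_mul_sub_eq_sum_sub_three_mul f0 f1 f2 f3 _ t hEuler hEdge hF2 hVert
  have hle : (f3 : ℝ) ≤ f0 := by
    have := sum_sub_three_mul_nonneg hs t
    exact_mod_cast (by omega : (f3 : ℤ) ≤ f0)
  have hzero_iff : (f0 : ℝ) - f3 = 0 ↔ ∀ k : ℕ, 4 ≤ k → t k = 0 := by
    rw [sub_eq_zero, Nat.cast_inj, ← Int.natCast_inj, ← sub_eq_zero,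
      ← mul_eq_zero_iff_left three_ne_zero, key, sum_sub_three_mul_eq_zero_iff hs]
    exact ⟨fun h k hk => if hkN : k ≤ N then h k (Finset.mem_Icc.mpr ⟨by omega, hkN⟩) hk
      else ht k (by omega), fun h k _ => h k⟩
  rw [← hzero_iff]
  exact add_four_mul_pi_sq_div_three_ge_and_eq_iff (sub_nonneg.mpr hle)

/-- Quantitative core of the minimal-volume theorem: the volume
`(f₀ - f₃ + 4)·π²/3` of an ideal right-angled polytope in `ℍ⁴` is at least
`4π²/3`, the volume of the hyperbolic 24-cell, with equality iff all
two-dimensional faces are triangles. -/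
theorem volume_ge_24cell
    (f0 f1 f2 f3 N : ℕ) (t : ℕ → ℕ) (hN : 3 ≤ N)
    (ht : ∀ k : ℕ, ¬(3 ≤ k ∧ k ≤ N) → t k = 0)
    (hEuler : (f0 : ℤ) - f1 + f2 - f3 = 0)
    (hEdge : f1 = 4 * f0)
    (hF2 : f2 = ∑ k ∈ Finset.Icc 3 N, t k)
    (hVert : 12 * f0 = ∑ k ∈ Finset.Icc 3 N, k * t k) :
    ((f0 : ℝ) - (f3 : ℝ) + 4) * π ^ 2 / 3 ≥ 4 * π ^ 2 / 3 ∧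
      (((f0 : ℝ) - (f3 : ℝ) + 4) * π ^ 2 / 3 = 4 * π ^ 2 / 3 ↔
        ∀ k : ℕ, 4 ≤ k → t k = 0) :=
  volume_ge_24cell_general f0 f1 f2 f3 N t ht hEuler hEdge hF2 hVert
end

section
/- Let B be the Minkowski bilinear form on ℝ^5 = (Fin 5 → ℝ) defined by B(x, y) = x 0·y 0 + x 1·y 1 + x 2·y 2 + x 3·y 3 - x 4·y 4, and let a > 1 and b > 1 be real numbers. Then there do not exist vectors e₁, e₂, e₃, e₄ ∈ ℝ^5 with B(eᵢ, eᵢ) = 1 for all i, B(e₁, e₂) = B(e₂, e₃) = B(e₃, e₄) = B(e₄, e₁) = 0, B(e₁, e₃) = -a, and B(e₂, e₄) = -b. -/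
/-!
Put `x = e₁ + e₃` and `y = e₂ + e₄`. The Gram relations give `B(x, x) = 2 - 2a < 0`,
`B(y, y) = 2 - 2b < 0` and `B(x, y) = 0`. But two timelike vectors of a Lorentzian form are never
orthogonal: by Cauchy–Schwarz the spatial parts satisfy `|⟨x̄, ȳ⟩| ≤ |x̄| |ȳ| < |x₄| |y₄|`.
-/

open Finset

/-- The Lorentzian form of signature `(n, 1)`; the last coordinate is the timelike one. -/
def minkowskiForm (n : ℕ) (x y : Fin (n + 1) → ℝ) : ℝ :=
  ∑ i : Fin n, x i.castSucc * y i.castSucc - x (Fin.last n) * y (Fin.last n)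

namespace minkowskiForm

variable {n : ℕ}

theorem comm (x y : Fin (n + 1) → ℝ) : minkowskiForm n x y = minkowskiForm n y x := by
  simp only [minkowskiForm, mul_comm]

theorem add_left (x x' y : Fin (n + 1) → ℝ) :
    minkowskiForm n (x + x') y = minkowskiForm n x y + minkowskiForm n x' y := by
  simp only [minkowskiForm, Pi.add_apply, add_mul, sum_add_distrib]
  ring

theorem add_right (x y y' : Fin (n + 1) → ℝ) :
    minkowskiForm n x (y + y') = minkowskiForm n x y + minkowskiForm n x y' := by
  rw [comm, add_left, comm y, comm y']

theorem ne_zero_of_neg {x y : Fin (n + 1) → ℝ} (hx : minkowskiForm n x x < 0)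
    (hy : minkowskiForm n y y < 0) : minkowskiForm n x y ≠ 0 := by
  intro hxy
  simp only [minkowskiForm, sub_neg, ← sq] at hx hy
  rw [minkowskiForm, sub_eq_zero] at hxy
  have hcs := sum_mul_sq_le_sq_mul_sq univ (fun i : Fin n ↦ x i.castSucc) (fun i ↦ y i.castSucc)
  have hprod : (∑ i : Fin n, x i.castSucc ^ 2) * ∑ i : Fin n, y i.castSucc ^ 2
      < x (Fin.last n) ^ 2 * y (Fin.last n) ^ 2 :=
    mul_lt_mul'' hx hy (sum_nonneg fun _ _ ↦ sq_nonneg _) (sum_nonneg fun _ _ ↦ sq_nonneg _)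
  rw [hxy, mul_pow] at hcs
  exact hprod.not_ge hcs

end minkowskiForm

/-- No `(4,0)` circuit: there are no vectors `e₁, …, e₄` in Minkowski space
`ℝ^{4,1}` with the Gram relations of a `(4,0)` circuit of facets. -/
theorem no_four_circuit
    (B : (Fin 5 → ℝ) → (Fin 5 → ℝ) → ℝ)
    (hB : ∀ x y : Fin 5 → ℝ,
      B x y = x 0 * y 0 + x 1 * y 1 + x 2 * y 2 + x 3 * y 3 - x 4 * y 4)
    (a b : ℝ) (ha : 1 < a) (hb : 1 < b) :
    ¬ ∃ e : Fin 4 → (Fin 5 → ℝ),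
      (∀ i : Fin 4, B (e i) (e i) = 1) ∧
      B (e 0) (e 1) = 0 ∧ B (e 1) (e 2) = 0 ∧ B (e 2) (e 3) = 0 ∧ B (e 3) (e 0) = 0 ∧
      B (e 0) (e 2) = -a ∧ B (e 1) (e 3) = -b := by
  rintro ⟨e, hunit, h01, h12, h23, h30, h02, h13⟩
  obtain rfl : B = minkowskiForm 4 := by
    funext x y
    simp [hB, minkowskiForm, Fin.sum_univ_four]
  open minkowskiForm in
  refine ne_zero_of_neg (x := e 0 + e 2) (y := e 1 + e 3) ?_ ?_ ?_
  · rw [add_left, add_right, add_right, comm (e 2), hunit, hunit, h02]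
    linarith
  · rw [add_left, add_right, add_right, comm (e 3), hunit, hunit, h13]
    linarith
  · rw [add_left, add_right, add_right, comm (e 0) (e 3), comm (e 2) (e 1), h01, h12, h23, h30]
    norm_num
end

section
/- For every natural number n ≥ 7, one has (n - 3) · (choose (n/2) 3 + choose ((n+1)/2) 3) ≤ 24 · (choose (n/2) 4 + choose ((n+1)/2) 4), where n/2 and (n+1)/2 denote natural-number (floor) division and choose is the binomial coefficient. -/
/-!
Since `4 * C(k, 4) = (k - 3) * C(k, 3)`, the inequality holds termwise as soon as
`n - 3 ≤ 6 * (k - 3)` for both `k = ⌊n/2⌋` and `k = ⌊(n+1)/2⌋`, which is true for `n ≥ 8`.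
The case `n = 7`, where `⌊n/2⌋ = 3`, is checked directly.
-/

theorem Nat.mul_choose_le_mul_choose_succ {a b k j : ℕ} (h : a ≤ b * (k - j)) :
    a * k.choose j ≤ b * (j + 1) * k.choose (j + 1) :=
  calc a * k.choose j
      ≤ b * (k - j) * k.choose j := Nat.mul_le_mul_right _ h
    _ = b * (j + 1) * k.choose (j + 1) := by
      rw [mul_assoc, mul_assoc, mul_comm (j + 1), Nat.choose_succ_right_eq, mul_comm (k - j)]

/-- The numerical inequality behind the dimension bound: for `n ≥ 7`, the
Nikulin–Khovanskiĭ upper bound for `f³₄` is at most `24`. -/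
theorem nikulin_khovanskii_bound (n : ℕ) (hn : 7 ≤ n) :
    (n - 3) * (Nat.choose (n / 2) 3 + Nat.choose ((n + 1) / 2) 3)
      ≤ 24 * (Nat.choose (n / 2) 4 + Nat.choose ((n + 1) / 2) 4) := by
  obtain rfl | h8 := hn.eq_or_lt
  · decide
  have hfloor := Nat.mul_choose_le_mul_choose_succ (j := 3) (by omega : n - 3 ≤ 6 * (n / 2 - 3))
  have hceil :=
    Nat.mul_choose_le_mul_choose_succ (j := 3) (by omega : n - 3 ≤ 6 * ((n + 1) / 2 - 3))
  rw [mul_add, mul_add]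
  exact add_le_add hfloor hceil
end
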